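/- arXiv:2208.11820 — 4 statements merged into one kernel-verified Lean document; each statement's English description precedes it below -/
import Mathlib

section
/- Let K be a field and let g, h ∈ K(x) be rational functions with h nonconstant. Then deg(g ∘ h) = (deg g)·(deg h). -/
/-- The degree of a rational function `f = f₁/f₂` (with `f₁, f₂` coprime) is
`max (deg f₁) (deg f₂)`. -/
noncomputable def ratDeg {K : Type*} [Field K] (f : RatFunc K) : ℕ :=
  max f.num.natDegree f.denom.natDegree

/-- The composition `g ∘ h` of rational functions: writing `g = g₁/g₂` with `g₁, g₂`
coprime, `g ∘ h = g₁(h) / g₂(h)`. -/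
noncomputable def ratComp {K : Type*} [Field K] (g h : RatFunc K) : RatFunc K :=
  Polynomial.aeval h g.num / Polynomial.aeval h g.denom

/-!
For every `f`, `deg f = [K(x) : K(f)]` (Mathlib's `finrank_eq_max_natDegree`; for constant `f`
both sides are `0`, since `finrank` of an infinite extension is `0`). Substituting `h` for `x` is
a `K`-embedding `σ` of `K(x)` into itself with image `K(h)` that carries `K(g)` onto `K(g ∘ h)`.
The tower `K(g ∘ h) ⊆ K(h) ⊆ K(x)` then gives
`[K(x) : K(g ∘ h)] = [K(h) : K(g ∘ h)] · [K(x) : K(h)] = [K(x) : K(g)] · deg h`.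
-/

open Polynomial IntermediateField Module

theorem IntermediateField.finrank_map_eq_finrank_mul_finrank_fieldRange {F L : Type*} [Field F]
    [Field L] [Algebra F L] (E : IntermediateField F L) (σ : L →ₐ[F] L) :
    finrank (E.map σ) L = finrank E L * finrank σ.fieldRange L := by
  have hle : E.map σ ≤ σ.fieldRange := σ.fieldRange_eq_map ▸ map_mono σ le_top
  rw [← relfinrank_mul_finrank_top hle, ← relfinrank_top_right E,
    ← relfinrank_map_map E ⊤ σ, ← σ.fieldRange_eq_map]

namespace RatFunc

variable {K : Type*} [Field K]

noncomputable def compAlgHom (h : RatFunc K) (hh : Transcendental K h) :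
    RatFunc K →ₐ[K] RatFunc K :=
  liftAlgHom (aeval h)
    (nonZeroDivisors_le_comap_nonZeroDivisors_of_injective _ (transcendental_iff_injective.mp hh))

variable {h : RatFunc K} (hh : Transcendental K h)

theorem compAlgHom_apply (g : RatFunc K) : compAlgHom h hh g = ratComp g h :=
  liftAlgHom_apply _ _ g

theorem compAlgHom_X : compAlgHom h hh X = h := by
  simp [compAlgHom_apply, ratComp]

theorem adjoin_ratComp (g : RatFunc K) : K⟮ratComp g h⟯ = K⟮g⟯.map (compAlgHom h hh) := by
  rw [adjoin_map, Set.image_singleton, compAlgHom_apply]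

theorem fieldRange_compAlgHom : (compAlgHom h hh).fieldRange = K⟮h⟯ := by
  rw [AlgHom.fieldRange_eq_map, ← adjoin_X, adjoin_map, Set.image_singleton, compAlgHom_X]

end RatFunc

theorem ratDeg_eq_finrank_adjoin {K : Type*} [Field K] (f : RatFunc K) :
    ratDeg f = finrank K⟮f⟯ (RatFunc K) :=
  (RatFunc.finrank_eq_max_natDegree f).symm

/-- Let `K` be a field and `g, h ∈ K(x)` with `h` nonconstant.
Then `deg (g ∘ h) = (deg g) * (deg h)`. -/
theorem stmt_2 {K : Type*} [Field K] (g h : RatFunc K)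
    (hh : ∀ c : K, h ≠ RatFunc.C c) :
    ratDeg (ratComp g h) = ratDeg g * ratDeg h := by
  have ht : Transcendental K h := RatFunc.transcendental_of_ne_C h fun ⟨c, hc⟩ ↦ hh c hc
  simp only [ratDeg_eq_finrank_adjoin]
  rw [RatFunc.adjoin_ratComp ht, finrank_map_eq_finrank_mul_finrank_fieldRange,
    RatFunc.fieldRange_compAlgHom]
end

section
/- Let K be a field and let f = g ∘ h with g, h ∈ K(x), g nonzero and h nonconstant. Then there exist G, H ∈ K(x) such that f = G ∘ H, deg G = deg g, deg H = deg h, and ord_∞ H < 0. -/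
/-- The order of vanishing at infinity of a rational function `f = f₁/f₂`
(with `f₁, f₂` coprime): `ord_∞ f = deg f₂ − deg f₁ = −intDegree f`. -/
noncomputable def ordInf {K : Type*} [Field K] (f : RatFunc K) : ℤ :=
  -f.intDegree

open Polynomial

theorem MvPolynomial.IsHomogeneous.natDegree_aeval_le {σ R : Type*} [CommSemiring R]
    {F : MvPolynomial σ R} {n : ℕ} (hF : F.IsHomogeneous n) (x : σ → R[X]) {d : ℕ}
    (hx : ∀ i, (x i).natDegree ≤ d) : (MvPolynomial.aeval x F).natDegree ≤ n * d := by
  rw [MvPolynomial.aeval_def, MvPolynomial.eval₂_eq]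
  refine natDegree_sum_le_of_forall_le _ _ fun m hm => ?_
  calc _ ≤ (∏ i ∈ m.support, x i ^ m i).natDegree := natDegree_C_mul_le _ _
    _ ≤ ∑ i ∈ m.support, (x i ^ m i).natDegree := natDegree_prod_le _ _
    _ ≤ ∑ i ∈ m.support, m i * d :=
        Finset.sum_le_sum fun i _ => natDegree_pow_le.trans (Nat.mul_le_mul_left _ (hx i))
    _ = n * d := by
        rw [← Finset.sum_mul, ← hF (MvPolynomial.mem_support_iff.mp hm),
          Finsupp.weight_apply]
        simp [Finsupp.sum]

section Transcendental

variable {K L : Type*} [Field K] [Field L] [Algebra K L] {x : L}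

theorem Transcendental.add_algebraMap (hx : Transcendental K x) (c : K) :
    Transcendental K (x + algebraMap K L c) :=
  fun h => hx (by simpa using (h.isIntegral.sub (isIntegral_algebraMap (x := c))).isAlgebraic)

theorem Transcendental.sub_algebraMap (hx : Transcendental K x) (c : K) :
    Transcendental K (x - algebraMap K L c) := by
  simpa [sub_eq_add_neg] using hx.add_algebraMap (-c)

theorem Transcendental.inv (hx : Transcendental K x) : Transcendental K x⁻¹ :=
  mt IsAlgebraic.inv_iff.mp hx

end Transcendental

section RatFunc

variable {K : Type*} [Field K]

theorem RatFunc.algHom_ext {L : Type*} [Semiring L] [Algebra K L] {f g : RatFunc K →ₐ[K] L}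
    (h : f RatFunc.X = g RatFunc.X) : f = g :=
  IsLocalization.algHom_ext (nonZeroDivisors K[X]) (Polynomial.algHom_ext h)

noncomputable def ratCompAlgHom {h : RatFunc K} (th : Transcendental K h) :
    RatFunc K →ₐ[K] RatFunc K :=
  RatFunc.liftAlgHom (aeval h)
    (nonZeroDivisors_le_comap_nonZeroDivisors_of_injective _ (transcendental_iff_injective.mp th))

theorem ratComp_eq_ratCompAlgHom {h : RatFunc K} (th : Transcendental K h) (g : RatFunc K) :
    ratComp g h = ratCompAlgHom th g :=
  (RatFunc.liftAlgHom_apply _ _ g).symm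

@[simp]
theorem ratCompAlgHom_X {h : RatFunc K} (th : Transcendental K h) :
    ratCompAlgHom th RatFunc.X = h := by
  rw [← ratComp_eq_ratCompAlgHom, ratComp]
  simp

theorem ratComp_X (g : RatFunc K) : ratComp g RatFunc.X = g := by
  rw [ratComp_eq_ratCompAlgHom RatFunc.transcendental_X]
  exact DFunLike.congr_fun (RatFunc.algHom_ext (g := AlgHom.id K _) (ratCompAlgHom_X _)) g

theorem Transcendental.ratComp {g h : RatFunc K} (tg : Transcendental K g)
    (th : Transcendental K h) : Transcendental K (ratComp g h) := by
  rw [ratComp_eq_ratCompAlgHom th, Transcendental,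
    isAlgebraic_algHom_iff _ (ratCompAlgHom th : RatFunc K →+* RatFunc K).injective]
  exact tg

theorem ratComp_assoc (g : RatFunc K) {w h : RatFunc K} (tw : Transcendental K w)
    (th : Transcendental K h) : ratComp (ratComp g w) h = ratComp g (ratComp w h) := by
  have twh := tw.ratComp th
  have : (ratCompAlgHom th).comp (ratCompAlgHom tw) = ratCompAlgHom twh :=
    RatFunc.algHom_ext (by simp [ratComp_eq_ratCompAlgHom th])
  rw [ratComp_eq_ratCompAlgHom twh, ratComp_eq_ratCompAlgHom th, ratComp_eq_ratCompAlgHom tw]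
  exact DFunLike.congr_fun this g

theorem aeval_eq_div_homogenize (b : RatFunc K) {p : K[X]} {N : ℕ} (hp : p.natDegree ≤ N) :
    aeval b p =
      algebraMap K[X] (RatFunc K) (MvPolynomial.aeval ![b.num, b.denom] (p.homogenize N)) /
        algebraMap K[X] (RatFunc K) b.denom ^ N := by
  have hd : algebraMap K[X] (RatFunc K) b.denom ≠ 0 := RatFunc.algebraMap_ne_zero b.denom_ne_zero
  have key := eval_homogenize (p := p.map (algebraMap K (RatFunc K)))
    (natDegree_map_le.trans hp) ![algebraMap K[X] _ b.num, algebraMap K[X] _ b.denom] hd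
  simp only [Matrix.cons_val_zero, Matrix.cons_val_one, RatFunc.num_div_denom, eval_map_algebraMap,
    homogenize_map, MvPolynomial.eval_map] at key
  rw [eq_div_iff (pow_ne_zero _ hd), ← key, MvPolynomial.map_aeval]
  congr 1
  ext i
  fin_cases i <;> rfl

theorem ratDeg_div_le (p q : K[X]) :
    ratDeg (algebraMap K[X] (RatFunc K) p / algebraMap K[X] (RatFunc K) q) ≤
      max p.natDegree q.natDegree := by
  rcases eq_or_ne p 0 with rfl | hp
  · simp [ratDeg]
  rcases eq_or_ne q 0 with rfl | hq
  · simp [ratDeg]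
  exact max_le_max (natDegree_le_of_dvd (RatFunc.num_div_dvd p hq) hp)
    (natDegree_le_of_dvd (RatFunc.denom_div_dvd p q) hq)

theorem ratDeg_div_of_isCoprime {p q : K[X]} (hp : p ≠ 0) (hq : q ≠ 0) (hpq : IsCoprime p q) :
    ratDeg (algebraMap K[X] (RatFunc K) p / algebraMap K[X] (RatFunc K) q) =
      max p.natDegree q.natDegree := by
  set x := algebraMap K[X] (RatFunc K) p / algebraMap K[X] (RatFunc K) q
  have hx : x ≠ 0 := div_ne_zero (RatFunc.algebraMap_ne_zero hp) (RatFunc.algebraMap_ne_zero hq)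
  have cross : x.num * q = p * x.denom := by
    apply RatFunc.algebraMap_injective K
    rw [map_mul, map_mul, ← div_eq_div_iff (RatFunc.algebraMap_ne_zero x.denom_ne_zero)
      (RatFunc.algebraMap_ne_zero hq), RatFunc.num_div_denom]
  refine le_antisymm (ratDeg_div_le p q) (max_le_max ?_ ?_)
  · exact natDegree_le_of_dvd (hpq.dvd_of_dvd_mul_right ⟨x.denom, cross⟩) (RatFunc.num_ne_zero hx)
  · exact natDegree_le_of_dvd (hpq.symm.dvd_of_dvd_mul_left ⟨x.num, by rw [← cross, mul_comm]⟩)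
      x.denom_ne_zero

theorem ratDeg_ratComp_le (a b : RatFunc K) : ratDeg (ratComp a b) ≤ ratDeg a * ratDeg b := by
  have hb : ∀ i, (![b.num, b.denom] i).natDegree ≤ ratDeg b := by
    intro i
    fin_cases i
    exacts [le_max_left _ _, le_max_right _ _]
  rw [ratComp, aeval_eq_div_homogenize b (le_max_left _ _ : a.num.natDegree ≤ ratDeg a),
    aeval_eq_div_homogenize b (le_max_right _ _ : a.denom.natDegree ≤ ratDeg a),
    div_div_div_cancel_right₀ (pow_ne_zero _ (RatFunc.algebraMap_ne_zero b.denom_ne_zero))]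
  exact (ratDeg_div_le _ _).trans (max_le
    ((isHomogeneous_homogenize _).natDegree_aeval_le _ hb)
    ((isHomogeneous_homogenize _).natDegree_aeval_le _ hb))

theorem ratDeg_ratComp_eq_of_ratComp_eq_X (g : RatFunc K) {w w' : RatFunc K}
    (tw : Transcendental K w) (tw' : Transcendental K w') (hw : ratDeg w ≤ 1)
    (hw' : ratDeg w' ≤ 1) (hww' : ratComp w w' = RatFunc.X) :
    ratDeg (ratComp g w) = ratDeg g := by
  have hg : ratComp (ratComp g w) w' = g := by
    rw [ratComp_assoc g tw tw', hww', ratComp_X]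
  refine le_antisymm ((ratDeg_ratComp_le g w).trans ?_) ?_
  · simpa using Nat.mul_le_mul_left (ratDeg g) hw
  · conv_lhs => rw [← hg]
    exact (ratDeg_ratComp_le _ w').trans (by simpa using Nat.mul_le_mul_left _ hw')

theorem transcendental_inv_X_add_C (c : K) :
    Transcendental K (RatFunc.X⁻¹ + RatFunc.C c : RatFunc K) := by
  simpa [RatFunc.algebraMap_eq_C] using RatFunc.transcendental_X.inv.add_algebraMap c

theorem Transcendental.inv_sub_C {x : RatFunc K} (hx : Transcendental K x) (c : K) :
    Transcendental K (x - RatFunc.C c)⁻¹ := by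
  simpa [RatFunc.algebraMap_eq_C] using (hx.sub_algebraMap c).inv

theorem ratComp_inv_X_add_C {h : RatFunc K} (th : Transcendental K h) (c : K) :
    ratComp (RatFunc.X⁻¹ + RatFunc.C c) h = h⁻¹ + RatFunc.C c := by
  simp [ratComp_eq_ratCompAlgHom th, ← RatFunc.algebraMap_eq_C]

theorem ratDeg_inv_X_add_C_le (c : K) : ratDeg (RatFunc.X⁻¹ + RatFunc.C c : RatFunc K) ≤ 1 := by
  have : (RatFunc.X⁻¹ + RatFunc.C c : RatFunc K) =
      algebraMap K[X] (RatFunc K) (C c * X + C 1) / algebraMap K[X] (RatFunc K) X := by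
    rw [map_add, map_mul, RatFunc.algebraMap_C, RatFunc.algebraMap_C, RatFunc.algebraMap_X,
      add_div, mul_div_cancel_right₀ _ RatFunc.X_ne_zero, map_one, one_div, add_comm]
  rw [this]
  exact (ratDeg_div_le _ _).trans (max_le natDegree_linear_le natDegree_X_le)

theorem ratDeg_inv_X_sub_C_le (c : K) : ratDeg (RatFunc.X - RatFunc.C c : RatFunc K)⁻¹ ≤ 1 := by
  rw [← RatFunc.algebraMap_X, ← RatFunc.algebraMap_C, ← map_sub, inv_eq_one_div,
    ← map_one (algebraMap K[X] _)]
  exact (ratDeg_div_le _ _).trans (max_le (by simp) (natDegree_X_sub_C_le c))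

theorem ratDeg_ratComp_inv_X_add_C (g : RatFunc K) (c : K) :
    ratDeg (ratComp g (RatFunc.X⁻¹ + RatFunc.C c)) = ratDeg g := by
  have tw' := RatFunc.transcendental_X.inv_sub_C c
  refine ratDeg_ratComp_eq_of_ratComp_eq_X g (transcendental_inv_X_add_C c) tw'
    (ratDeg_inv_X_add_C_le c) (ratDeg_inv_X_sub_C_le c) ?_
  rw [ratComp_inv_X_add_C tw', inv_inv, sub_add_cancel]

theorem exists_natDegree_sub_C_mul_lt {p q : K[X]} (hq : 0 < q.natDegree)
    (hpq : p.natDegree ≤ q.natDegree) : ∃ c, (p - C c * q).natDegree < q.natDegree := by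
  have hlc : q.leadingCoeff ≠ 0 := leadingCoeff_ne_zero.mpr (ne_zero_of_natDegree_gt hq)
  set c := p.coeff q.natDegree / q.leadingCoeff
  have : (p - C c * q).natDegree ≤ q.natDegree - 1 :=
    natDegree_le_pred ((natDegree_sub_le_of_le hpq (natDegree_C_mul_le c q)).trans_eq (max_self _))
      (by simp [c, coeff_C_mul, div_mul_cancel₀ _ hlc])
  exact ⟨c, by omega⟩

theorem exists_ordInf_inv_sub_C_neg {h : RatFunc K} (hh : ∀ c : K, h ≠ RatFunc.C c)
    (hord : 0 ≤ ordInf h) :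
    ∃ c : K, ratDeg (h - RatFunc.C c)⁻¹ = ratDeg h ∧ ordInf (h - RatFunc.C c)⁻¹ < 0 := by
  have hdeg : h.num.natDegree ≤ h.denom.natDegree := by
    rw [ordInf, RatFunc.intDegree] at hord
    omega
  have hpos : 0 < h.denom.natDegree := by
    by_contra! h0
    obtain ⟨c, hc⟩ := (RatFunc.eq_C_iff h).mpr ⟨by omega, by omega⟩
    exact hh c hc
  obtain ⟨c, hc⟩ := exists_natDegree_sub_C_mul_lt hpos hdeg
  set r := h.num - C c * h.denom
  have hr : r ≠ 0 := by
    intro hr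
    apply hh c
    rw [← RatFunc.num_div_denom h, sub_eq_zero.mp hr, map_mul, RatFunc.algebraMap_C,
      mul_div_cancel_right₀ _ (RatFunc.algebraMap_ne_zero h.denom_ne_zero)]
  have hH : (h - RatFunc.C c)⁻¹ =
      algebraMap K[X] (RatFunc K) h.denom / algebraMap K[X] (RatFunc K) r := by
    rw [← inv_div, map_sub, map_mul, RatFunc.algebraMap_C, sub_div, RatFunc.num_div_denom,
      mul_div_cancel_right₀ _ (RatFunc.algebraMap_ne_zero h.denom_ne_zero)]
  refine ⟨c, ?_, ?_⟩
  · rw [hH, ratDeg_div_of_isCoprime h.denom_ne_zero hr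
      (IsCoprime.sub_mul_right_left_iff.mpr h.isCoprime_num_denom).symm, ratDeg,
      max_eq_right hdeg, max_eq_left hc.le]
  · rw [hH, ordInf, RatFunc.intDegree_div (RatFunc.algebraMap_ne_zero h.denom_ne_zero)
      (RatFunc.algebraMap_ne_zero hr), RatFunc.intDegree_polynomial, RatFunc.intDegree_polynomial]
    omega

end RatFunc

theorem stmt_6_general {K : Type*} [Field K] (f g h : RatFunc K)
    (hh : ∀ c : K, h ≠ RatFunc.C c) (hf : f = ratComp g h) :
    ∃ G H : RatFunc K, f = ratComp G H ∧ ratDeg G = ratDeg g ∧ ratDeg H = ratDeg h ∧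
      ordInf H < 0 := by
  by_cases hord : ordInf h < 0
  · exact ⟨g, h, hf, rfl, rfl, hord⟩
  obtain ⟨c, hdeg, hord⟩ := exists_ordInf_inv_sub_C_neg hh (not_lt.mp hord)
  have th : Transcendental K h := RatFunc.transcendental_of_ne_C h fun ⟨c, hc⟩ => hh c hc
  have tH := th.inv_sub_C c
  refine ⟨ratComp g (RatFunc.X⁻¹ + RatFunc.C c), (h - RatFunc.C c)⁻¹, ?_,
    ratDeg_ratComp_inv_X_add_C g c, hdeg, hord⟩
  rw [hf, ratComp_assoc g (transcendental_inv_X_add_C c) tH, ratComp_inv_X_add_C tH, inv_inv,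
    sub_add_cancel]

/-- Let `K` be a field and `f = g ∘ h` with `g, h ∈ K(x)`, `g` nonzero
and `h` nonconstant.  Then there exist `G, H ∈ K(x)` such that `f = G ∘ H`,
`deg G = deg g`, `deg H = deg h`, and `ord_∞ H < 0`. -/
theorem stmt_6 {K : Type*} [Field K] (f g h : RatFunc K) (hg : g ≠ 0)
    (hh : ∀ c : K, h ≠ RatFunc.C c) (hf : f = ratComp g h) :
    ∃ G H : RatFunc K, f = ratComp G H ∧ ratDeg G = ratDeg g ∧ ratDeg H = ratDeg h ∧
      ordInf H < 0 :=
  stmt_6_general f g h hh hf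
end

section
/- Let f ∈ ℂ[x] be a polynomial with deg f ≥ 2, and let d be the greatest proper divisor of deg f. If there exist a ∈ ℂ and a prime number p with p > d such that v_f(a) = p (equivalently, a is a root of the derivative f′ of multiplicity p − 1), then f is prime: there do not exist g, h ∈ ℂ[x] with deg g ≥ 2 and deg h ≥ 2 such that f = g ∘ h. -/
/-!
The valency is multiplicative under composition, `v_{g ∘ h}(a) = v_g(h(a)) · v_h(a)`, and is
bounded by the degree. So if `f = g ∘ h` has a point of prime valency `p`, one of the two
factors is `p` itself, which exceeds `d ≥ max (deg g) (deg h)`.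
-/

open Polynomial

namespace Polynomial

variable {R : Type*} [CommRing R] [IsDomain R]

-- For constant `f`, where the paper's `v_f(a)` is undefined, this is `1`.
noncomputable def valency (f : R[X]) (a : R) : ℕ :=
  (derivative f).rootMultiplicity a + 1

theorem rootMultiplicity_pow (p : R[X]) (a : R) (n : ℕ) :
    rootMultiplicity a (p ^ n) = n * rootMultiplicity a p := by
  classical
  simp only [← count_roots, roots_pow, Multiset.count_nsmul]

theorem rootMultiplicity_le_natDegree (p : R[X]) (a : R) : rootMultiplicity a p ≤ p.natDegree := by
  classical
  exact count_roots (a := a) p ▸ (Multiset.count_le_card a p.roots).trans (card_roots' p)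

theorem comp_ne_zero {p q : R[X]} (hp : p ≠ 0) (hq : 0 < q.natDegree) : p.comp q ≠ 0 := by
  intro h0
  rcases comp_eq_zero_iff.1 h0 with h | ⟨-, h⟩
  · exact hp h
  · rw [h, natDegree_C] at hq
    exact hq.false

theorem rootMultiplicity_comp {g h : R[X]} (a : R) (hg : g ≠ 0) (hh : 0 < h.natDegree) :
    rootMultiplicity a (g.comp h) =
      rootMultiplicity (h.eval a) g * rootMultiplicity a (h - C (h.eval a)) := by
  set b := h.eval a
  obtain ⟨q, hgq, hq⟩ := g.exists_eq_pow_rootMultiplicity_mul_and_not_dvd hg b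
  have hqh : ¬(q.comp h).IsRoot a := by
    rwa [IsRoot, eval_comp, ← IsRoot, ← dvd_iff_isRoot]
  have hhb : h - C b ≠ 0 := ne_zero_of_natDegree_gt (n := 0) (by rwa [natDegree_sub_C])
  have hcomp : g.comp h = (h - C b) ^ rootMultiplicity b g * q.comp h := by
    conv_lhs => rw [hgq]
    simp only [mul_comp, pow_comp, sub_comp, X_comp, C_comp]
  have hne : q.comp h ≠ 0 := fun h0 => hqh (by simp [h0])
  rw [hcomp, rootMultiplicity_mul (mul_ne_zero (pow_ne_zero _ hhb) hne), rootMultiplicity_pow,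
    rootMultiplicity_eq_zero hqh, add_zero]

theorem valency_le_natDegree {f : R[X]} (hf : 0 < f.natDegree) (a : R) :
    f.valency a ≤ f.natDegree :=
  Nat.succ_le_of_lt <|
    (rootMultiplicity_le_natDegree _ a).trans_lt (natDegree_derivative_lt hf.ne')

variable [CharZero R]

theorem valency_comp {g h : R[X]} (hg : 0 < g.natDegree) (hh : 0 < h.natDegree) (a : R) :
    (g.comp h).valency a = g.valency (h.eval a) * h.valency a := by
  have hg' : derivative g ≠ 0 := derivative_eq_zero.not.2 hg.ne'
  have hh' : derivative h ≠ 0 := derivative_eq_zero.not.2 hh.ne'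
  have hroot : (h - C (h.eval a)).IsRoot a := by simp [IsRoot]
  have hhb : h - C (h.eval a) ≠ 0 := ne_zero_of_natDegree_gt (n := 0) (by rwa [natDegree_sub_C])
  have hsub : rootMultiplicity a (h - C (h.eval a)) = h.valency a := by
    have hpos := (rootMultiplicity_pos hhb).2 hroot
    have := derivative_rootMultiplicity_of_root hroot
    rw [derivative_sub, derivative_C, sub_zero] at this
    rw [valency]
    omega
  rw [valency, derivative_comp, rootMultiplicity_mul (mul_ne_zero hh' (comp_ne_zero hg' hh)),
    rootMultiplicity_comp a hg' hh, hsub, valency, valency]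
  ring

end Polynomial

theorem stmt_9_general (f : Polynomial ℂ) (d : ℕ)
    (hdmax : ∀ e : ℕ, e ∣ f.natDegree → e < f.natDegree → e ≤ d)
    (a : ℂ) (p : ℕ) (hp : p.Prime) (hpd : d < p)
    (hval : (derivative f).rootMultiplicity a = p - 1) :
    ¬ ∃ g h : Polynomial ℂ, 2 ≤ g.natDegree ∧ 2 ≤ h.natDegree ∧ f = g.comp h := by
  rintro ⟨g, h, hg, hh, rfl⟩
  have hfd : (g.comp h).natDegree = g.natDegree * h.natDegree := natDegree_comp
  have hgd : g.natDegree ≤ d := hdmax _ (Dvd.intro _ hfd.symm) (by rw [hfd]; nlinarith)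
  have hhd : h.natDegree ≤ d := hdmax _ (Dvd.intro_left _ hfd.symm) (by rw [hfd]; nlinarith)
  have hprod : g.valency (h.eval a) * h.valency a = p := by
    rw [← valency_comp (by omega) (by omega), valency, hval, Nat.sub_add_cancel hp.one_le]
  have hgv := valency_le_natDegree (by omega : 0 < g.natDegree) (h.eval a)
  have hhv := valency_le_natDegree (by omega : 0 < h.natDegree) a
  rcases Nat.prime_mul_iff.1 (hprod ▸ hp) with ⟨-, h1⟩ | ⟨-, h1⟩
  · rw [h1, mul_one] at hprod
    omega
  · rw [h1, one_mul] at hprod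
    omega

/-- Let `f ∈ ℂ[x]` with `deg f ≥ 2` and `d` the greatest proper
divisor of `deg f`.  If there exist `a ∈ ℂ` and a prime `p > d` with `v_f(a) = p`
(i.e. `a` is a root of `f'` of multiplicity `p − 1`), then `f` is prime: there do
not exist `g, h ∈ ℂ[x]` with `deg g ≥ 2`, `deg h ≥ 2` and `f = g ∘ h`. -/
theorem stmt_9 (f : Polynomial ℂ) (hdeg : 2 ≤ f.natDegree)
    (d : ℕ) (hd : d ∣ f.natDegree) (hdlt : d < f.natDegree)
    (hdmax : ∀ e : ℕ, e ∣ f.natDegree → e < f.natDegree → e ≤ d)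
    (a : ℂ) (p : ℕ) (hp : p.Prime) (hpd : d < p)
    (hval : (derivative f).rootMultiplicity a = p - 1) :
    ¬ ∃ g h : Polynomial ℂ, 2 ≤ g.natDegree ∧ 2 ≤ h.natDegree ∧ f = g.comp h :=
  stmt_9_general f d hdmax a p hp hpd hval
end

section
/- Let K be a field and let f, g, h ∈ K[x] with f = g ∘ h, where g and h are nonconstant and f′ ≠ 0. Then there exists a nonzero constant a ∈ K such that, as an identity of polynomials in K[t], Res_X(f(X) − t, f′(X)) = a · (Res_X(g(X) − t, g′(X)))^{deg h} · Res_X(f(X) − t, h′(X)). -/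
/-! Over an algebraic closure `L` of `K(t)` every resultant is a product over roots:
`Res(p, q) = lc(p) ^ deg q * ∏_{p(x) = 0} q(x)`. With `G = g - t` and `F = G ∘ h = f - t`,
the chain rule `F' = h' * (g' ∘ h)` splits the product over the roots of `F` into one for `h'`
and one for `g' ∘ h`. The roots of `F` are the fibres `h(x) = β` over the roots `β` of `G`,
each of size `deg h`, so the second product is `(∏_{G(β) = 0} g'(β)) ^ deg h`. -/

open Polynomial

/-- The Sylvester matrix of two polynomials `p, q ∈ R[X]` (with respect to their
`natDegree`s): the first `deg q` rows hold the coefficients of `p`, shifted, and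
the last `deg p` rows hold the coefficients of `q`, shifted. -/
noncomputable def sylvesterMatrix {R : Type*} [CommRing R] (p q : Polynomial R) :
    Matrix (Fin (q.natDegree + p.natDegree)) (Fin (q.natDegree + p.natDegree)) R :=
  Matrix.of fun i j =>
    if (i : ℕ) < q.natDegree then
      if (j : ℕ) ≤ p.natDegree + i then p.coeff (p.natDegree + i - j) else 0
    else
      if (j : ℕ) ≤ (i : ℕ) then q.coeff ((i : ℕ) - j) else 0

/-- The resultant `Res_X(p, q)` of two polynomials, as the determinant of their
Sylvester matrix. -/
noncomputable def resultant {R : Type*} [CommRing R] (p q : Polynomial R) : R :=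
  (sylvesterMatrix p q).det

/-- For `f ∈ K[x]` and an auxiliary variable `t`, the polynomial `f(X) − t`
regarded as a polynomial in `X` with coefficients in `K[t]`. -/
noncomputable def polySubT {K : Type*} [Field K] (f : Polynomial K) :
    Polynomial (Polynomial K) :=
  f.map Polynomial.C - Polynomial.C Polynomial.X

theorem sylvester_apply {R : Type*} [Semiring R] (f g : R[X]) (m n : ℕ) (i j : Fin (m + n)) :
    sylvester f g m n i j =
      if (j : ℕ) < m then (if (j : ℕ) ≤ i ∧ (i : ℕ) ≤ j + n then g.coeff (i - j) else 0)
      else if (j : ℕ) - m ≤ i ∧ (i : ℕ) ≤ j then f.coeff (i - (j - m)) else 0 := by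
  induction j using Fin.addCases with
  | left j => simp [sylvester, j.isLt]
  | right j => simp [sylvester, add_comm]

open Matrix in
theorem sylvesterMatrix_eq_submatrix_sylvester {R : Type*} [CommRing R] (p q : R[X]) :
    sylvesterMatrix p q = (sylvester p q p.natDegree q.natDegree)ᵀ.submatrix
      (fun i => (Fin.cast (add_comm _ _) i).rev) (fun j => (Fin.cast (add_comm _ _) j).rev) := by
  ext i j
  simp only [sylvesterMatrix, sylvester_apply, of_apply, submatrix_apply, transpose_apply,
    Fin.val_rev, Fin.val_cast]
  have hi := i.isLt
  have hj := j.isLt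
  split_ifs <;>
    first | omega | rfl | (congr 1; omega) | (apply coeff_eq_zero_of_natDegree_lt; omega)

open Matrix in
theorem resultant_eq_polynomial_resultant {R : Type*} [CommRing R] (p q : R[X]) :
    _root_.resultant p q = p.resultant q := by
  rw [_root_.resultant, sylvesterMatrix_eq_submatrix_sylvester]
  exact (det_submatrix_equiv_self ((finCongr (add_comm _ _)).trans Fin.revPerm) _).trans
    (det_transpose _)

theorem resultant_map_of_injective {R S : Type*} [CommRing R] [CommRing S] {φ : R →+* S}
    (hφ : Function.Injective φ) (p q : R[X]) :
    (p.map φ).resultant (q.map φ) = φ (p.resultant q) := by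
  rw [← resultant_map_map, natDegree_map_eq_of_injective hφ, natDegree_map_eq_of_injective hφ]

theorem roots_comp_eq_bind {R : Type*} [CommRing R] [IsDomain R] {g : R[X]} (hg : g.Splits)
    (hg0 : g ≠ 0) {h : R[X]} (hh : 0 < h.natDegree) :
    (g.comp h).roots = g.roots.bind fun β => (h - C β).roots := by
  conv_lhs => rw [hg.eq_prod_roots]
  have hne : ∀ β, h - C β ≠ 0 := fun β hβ =>
    hh.ne' (by rw [← natDegree_sub_C (a := β), hβ, natDegree_zero])
  rw [mul_comp, C_comp, multiset_prod_comp, Multiset.map_map,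
    roots_C_mul _ (leadingCoeff_ne_zero.2 hg0), roots_multiset_prod, Multiset.bind_map]
  · simp
  · intro hmem
    obtain ⟨β, -, hβ⟩ := Multiset.mem_map.1 hmem
    exact hne β (by simpa using hβ)

theorem prod_roots_comp_map_eval_eval {L : Type*} [Field L] [IsAlgClosed L] (p : L[X])
    {g : L[X]} (hg : g ≠ 0) {h : L[X]} (hh : 0 < h.natDegree) :
    ((g.comp h).roots.map fun x => p.eval (h.eval x)).prod =
      (g.roots.map p.eval).prod ^ h.natDegree := by
  rw [roots_comp_eq_bind (IsAlgClosed.splits g) hg hh, Multiset.map_bind, Multiset.prod_bind,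
    ← Multiset.prod_map_pow]
  refine congrArg Multiset.prod (Multiset.map_congr rfl fun β _ => ?_)
  have hfiber : ∀ x ∈ (h - C β).roots, p.eval (h.eval x) = p.eval β := fun x hx => by
    rw [show h.eval x = β by simpa [sub_eq_zero] using isRoot_of_mem_roots hx]
  rw [Multiset.map_congr rfl hfiber, Multiset.map_const', Multiset.prod_replicate,
    ← (IsAlgClosed.splits _).natDegree_eq_card_roots, natDegree_sub_C]

theorem resultant_comp_derivative {L : Type*} [Field L] [IsAlgClosed L] {g : L[X]} (hg : g ≠ 0)
    {h : L[X]} (hh : 0 < h.natDegree) :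
    (g.comp h).resultant (derivative (g.comp h)) =
      (g.comp h).leadingCoeff ^ (derivative (g.comp h)).natDegree /
          ((g.leadingCoeff ^ (derivative g).natDegree) ^ h.natDegree *
            (g.comp h).leadingCoeff ^ (derivative h).natDegree) *
        g.resultant (derivative g) ^ h.natDegree * (g.comp h).resultant (derivative h) := by
  have hf : g.comp h ≠ 0 := fun h0 => by
    rcases comp_eq_zero_iff.1 h0 with hg0 | ⟨-, hC⟩
    · exact hg hg0
    · rw [hC, natDegree_C] at hh; exact hh.false
  simp only [resultant_eq_prod_eval _ _ _ le_rfl (IsAlgClosed.splits _)]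
  rw [derivative_comp]
  simp only [eval_mul, eval_comp, Multiset.prod_map_mul, prod_roots_comp_map_eval_eval _ hg hh]
  have hlf := leadingCoeff_ne_zero.2 hf
  have hlg := leadingCoeff_ne_zero.2 hg
  field_simp
  ring

section polySubT

variable {K : Type*} [Field K]

theorem derivative_polySubT (f : K[X]) : derivative (polySubT f) = (derivative f).map C := by
  simp [polySubT, derivative_map]

theorem polySubT_comp (g h : K[X]) : polySubT (g.comp h) = (polySubT g).comp (h.map C) := by
  simp [polySubT, map_comp, sub_comp]

theorem natDegree_polySubT (f : K[X]) :
    (polySubT f).natDegree = f.natDegree := by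
  rw [polySubT, natDegree_sub_C, natDegree_map]

theorem leadingCoeff_polySubT {f : K[X]} (hf : 0 < f.natDegree) :
    (polySubT f).leadingCoeff = C f.leadingCoeff := by
  rw [polySubT, leadingCoeff_sub_of_degree_lt, leadingCoeff_map]
  rwa [degree_C X_ne_zero, degree_map, ← natDegree_pos_iff_degree_pos]

theorem resultant_polySubT_comp (g h : K[X]) (hg : 0 < g.natDegree) (hh : 0 < h.natDegree) :
    _root_.resultant (polySubT (g.comp h)) ((derivative (g.comp h)).map C) =
      C ((g.comp h).leadingCoeff ^ (derivative (g.comp h)).natDegree /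
          ((g.leadingCoeff ^ (derivative g).natDegree) ^ h.natDegree *
            (g.comp h).leadingCoeff ^ (derivative h).natDegree)) *
        _root_.resultant (polySubT g) ((derivative g).map C) ^ h.natDegree *
        _root_.resultant (polySubT (g.comp h)) ((derivative h).map C) := by
  let L := AlgebraicClosure (FractionRing K[X])
  let φ : K[X] →+* L :=
    (algebraMap (FractionRing K[X]) L).comp (algebraMap K[X] (FractionRing K[X]))
  have hφ : Function.Injective φ :=
    (algebraMap (FractionRing K[X]) L).injective.comp
      (IsFractionRing.injective K[X] (FractionRing K[X]))
  set G := (polySubT g).map φ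
  set H := h.map (φ.comp C)
  have hF : (polySubT (g.comp h)).map φ = G.comp H := by
    rw [polySubT_comp, Polynomial.map_comp, map_map]
  have hdF : ((derivative (g.comp h)).map C).map φ = derivative (G.comp H) := by
    rw [← hF, ← derivative_polySubT, derivative_map]
  have hdG : ((derivative g).map C).map φ = derivative G := by
    rw [← derivative_polySubT, derivative_map]
  have hdH : ((derivative h).map C).map φ = derivative H := by
    rw [map_map, derivative_map]
  have hG : G ≠ 0 :=
    (Polynomial.map_ne_zero_iff hφ).2 (ne_zero_of_natDegree_gt (by rwa [natDegree_polySubT]))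
  have hH : 0 < H.natDegree := by rwa [natDegree_map]
  apply hφ
  rw [map_mul, map_mul, map_pow]
  simp only [resultant_eq_polynomial_resultant]
  rw [← resultant_map_of_injective hφ, ← resultant_map_of_injective hφ,
    ← resultant_map_of_injective hφ, hF, hdF, hdG, hdH, resultant_comp_derivative hG hH]
  have hlc : ∀ {p : K[X]}, 0 < p.natDegree →
      ((polySubT p).map φ).leadingCoeff = φ (C p.leadingCoeff) := fun hp => by
    rw [leadingCoeff_map_of_injective hφ, leadingCoeff_polySubT hp]
  have hdeg : ∀ p : K[X], ((p.map C).map φ).natDegree = p.natDegree := fun p => by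
    rw [natDegree_map_eq_of_injective hφ, natDegree_map]
  rw [← hdF, ← hdG, ← hdH, ← hF, hlc (by rw [natDegree_comp]; positivity), hlc hg, hdeg, hdeg,
    hdeg, natDegree_map]
  have hk : ∀ a, φ (C a) = (φ.comp C) a := fun _ => rfl
  simp only [hk, map_div₀, map_mul, map_pow]
  rfl

end polySubT

theorem stmt_10_general {K : Type*} [Field K] (f g h : Polynomial K) (hfgh : f = g.comp h)
    (hg : 0 < g.natDegree) (hh : 0 < h.natDegree) :
    ∃ a : K, a ≠ 0 ∧
      _root_.resultant (polySubT f) ((derivative f).map Polynomial.C) =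
        Polynomial.C a *
          (_root_.resultant (polySubT g) ((derivative g).map Polynomial.C)) ^ h.natDegree *
          _root_.resultant (polySubT f) ((derivative h).map Polynomial.C) := by
  subst hfgh
  refine ⟨_, ?_, resultant_polySubT_comp g h hg hh⟩
  have hg0 : g ≠ 0 := ne_zero_of_natDegree_gt hg
  have hf0 : g.comp h ≠ 0 := ne_zero_of_natDegree_gt (by rw [natDegree_comp]; positivity)
  simp [hg0, hf0]

/-- Let `K` be a field and `f = g ∘ h` with `f, g, h ∈ K[x]`, `g` and
`h` nonconstant and `f' ≠ 0`.  Then there is a nonzero constant `a ∈ K` such that, in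
`K[t]`, `Res_X(f(X) − t, f'(X)) = a · Res_X(g(X) − t, g'(X))^{deg h} · Res_X(f(X) − t, h'(X))`. -/
theorem stmt_10 {K : Type*} [Field K] (f g h : Polynomial K) (hfgh : f = g.comp h)
    (hg : 0 < g.natDegree) (hh : 0 < h.natDegree) (hf' : derivative f ≠ 0) :
    ∃ a : K, a ≠ 0 ∧
      _root_.resultant (polySubT f) ((derivative f).map Polynomial.C) =
        Polynomial.C a *
          (_root_.resultant (polySubT g) ((derivative g).map Polynomial.C)) ^ h.natDegree *
          _root_.resultant (polySubT f) ((derivative h).map Polynomial.C) :=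
  stmt_10_general f g h hfgh hg hh
end
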